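/- Let k > 0, σ > 0, x > 0, and let r, T be real numbers. For t < T define d1(t) = (log(x/k) + (r + σ²/2)·(T - t))/(σ·√(T - t)) and d2(t) = d1(t) - σ·√(T - t), and let Φ and φ be the standard normal cumulative distribution function and probability density function. Then the Black–Scholes call price function t ↦ w(t) = x·Φ(d1(t)) - k·exp(-r·(T - t))·Φ(d2(t)) is differentiable at every t < T with derivative ∂w/∂t = -x·φ(d1(t))·σ/(2·√(T - t)) - r·k·exp(-r·(T - t))·Φ(d2(t)). -/

import Mathlib

open Real MeasureTheory

/-!
Differentiate by the chain rule. The derivative of `d₁` never has to be computed: since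
`d₂ = d₁ - σ√(T - t)`, it enters as `(x φ(d₁) - k e^{-r(T-t)} φ(d₂)) ∂d₁/∂t`, and this vanishes because
`d₁² - d₂² = 2 log(x/k) + 2r(T - t)`, i.e. `k e^{-r(T-t)} φ(d₂) = x φ(d₁)`.
-/

/-- Standard normal probability density function. -/
noncomputable def stdNormalPDF (y : ℝ) : ℝ := (1 / Real.sqrt (2 * π)) * Real.exp (-y ^ 2 / 2)

/-- Standard normal cumulative distribution function. -/
noncomputable def stdNormalCDF (y : ℝ) : ℝ := ∫ u in Set.Iic y, stdNormalPDF u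

lemma integrable_stdNormalPDF : Integrable stdNormalPDF := by
  refine ((integrable_exp_neg_mul_sq (by norm_num : (0 : ℝ) < 1 / 2)).const_mul
    (1 / √(2 * π))).congr (.of_forall fun y => ?_)
  simp only [stdNormalPDF]
  ring_nf

lemma continuous_stdNormalPDF : Continuous stdNormalPDF := by
  unfold stdNormalPDF; fun_prop

lemma hasDerivAt_stdNormalCDF (y : ℝ) : HasDerivAt stdNormalCDF (stdNormalPDF y) y := by
  have hsplit : ∀ z, stdNormalCDF 0 + ∫ u in (0 : ℝ)..z, stdNormalPDF u = stdNormalCDF z := by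
    intro z
    rw [stdNormalCDF, stdNormalCDF, ← intervalIntegral.integral_Iic_sub_Iic
      integrable_stdNormalPDF.integrableOn integrable_stdNormalPDF.integrableOn]
    ring
  refine ((intervalIntegral.integral_hasDerivAt_right integrable_stdNormalPDF.intervalIntegrable
    continuous_stdNormalPDF.aestronglyMeasurable.stronglyMeasurableAtFilter
    continuous_stdNormalPDF.continuousAt).const_add (stdNormalCDF 0)).congr_of_eventuallyEq
    (.of_forall fun z => (hsplit z).symm)

lemma stdNormalPDF_sub (a b : ℝ) :
    stdNormalPDF (a - b) = stdNormalPDF a * exp (a * b - b ^ 2 / 2) := by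
  simp only [stdNormalPDF]
  rw [mul_assoc, ← exp_add]
  ring_nf

lemma discounted_mul_stdNormalPDF_sub {x k r σ τ d : ℝ} (hx : 0 < x) (hk : 0 < k) (hτ : 0 ≤ τ)
    (hd : d * (σ * √τ) = log (x / k) + (r + σ ^ 2 / 2) * τ) :
    k * exp (-r * τ) * stdNormalPDF (d - σ * √τ) = x * stdNormalPDF d := by
  have hexponent : d * (σ * √τ) - (σ * √τ) ^ 2 / 2 = log (x / k) + r * τ := by
    rw [hd, mul_pow, sq_sqrt hτ]; ring
  rw [stdNormalPDF_sub, hexponent, exp_add, exp_log (div_pos hx hk), neg_mul, exp_neg]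
  field_simp

lemma hasDerivAt_sqrt_const_sub {T t : ℝ} (ht : t < T) :
    HasDerivAt (fun s => √(T - s)) (-1 / (2 * √(T - t))) t := by
  simpa using ((hasDerivAt_id t).const_sub T).sqrt (sub_pos.2 ht).ne'

theorem stmt_8 (k σ x r T : ℝ) (hk : 0 < k) (hσ : 0 < σ) (hx : 0 < x)
    (d1 : ℝ → ℝ)
    (hd1 : ∀ t, d1 t = (Real.log (x / k) + (r + σ ^ 2 / 2) * (T - t)) / (σ * Real.sqrt (T - t)))
    (d2 : ℝ → ℝ) (hd2 : ∀ t, d2 t = d1 t - σ * Real.sqrt (T - t)) :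
    ∀ t : ℝ, t < T →
      HasDerivAt
        (fun s : ℝ => x * stdNormalCDF (d1 s) - k * Real.exp (-r * (T - s)) * stdNormalCDF (d2 s))
        (-x * stdNormalPDF (d1 t) * σ / (2 * Real.sqrt (T - t)) -
          r * k * Real.exp (-r * (T - t)) * stdNormalCDF (d2 t)) t := by
  intro t ht
  have hτ : 0 < T - t := sub_pos.2 ht
  have hsqrt := hasDerivAt_sqrt_const_sub ht
  obtain ⟨D, hd1'⟩ : ∃ D, HasDerivAt d1 D t := by
    rw [funext hd1]
    exact ⟨_, ((by fun_prop : DifferentiableAt ℝ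
      (fun s => log (x / k) + (r + σ ^ 2 / 2) * (T - s)) t).div
      (hsqrt.differentiableAt.const_mul σ) (by positivity)).hasDerivAt⟩
  have hd2' : HasDerivAt d2 (D + σ / (2 * √(T - t))) t := by
    rw [funext hd2]
    exact (hd1'.sub (hsqrt.const_mul σ)).congr_deriv (by ring)
  have hexp : HasDerivAt (fun s => exp (-r * (T - s))) (exp (-r * (T - t)) * r) t := by
    simpa using ((hasDerivAt_id t).const_sub T |>.const_mul (-r)).exp
  have hkey : k * exp (-r * (T - t)) * stdNormalPDF (d2 t) = x * stdNormalPDF (d1 t) := by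
    rw [hd2]
    refine discounted_mul_stdNormalPDF_sub hx hk hτ.le ?_
    rw [hd1]
    field_simp
  refine (((hasDerivAt_stdNormalCDF _).comp t hd1' |>.const_mul x).sub
    ((hexp.const_mul k).mul ((hasDerivAt_stdNormalCDF _).comp t hd2'))).congr_deriv ?_
  simp only [Function.comp_apply]
  linear_combination -(D + σ / (2 * √(T - t))) * hkey
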